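/- Let p, q ∈ ℚ∞ with p < q and let x, y ∈ H. Then ⟨v_p^x, v_q^y⟩ = 0 if and only if the following condition, depending on the types (t(p), t(q)), holds: if t(p) = t(q) (any of the three values), then x = -y and d(p,q) = 2; if (t(p),t(q)) = (0,1), then y ∈ -H⁺x and d(p,q) = 1; if (t(p),t(q)) = (0,∞), then x ∈ H⁺y and d(p,q) = 1; if (t(p),t(q)) = (1,0), then x ∈ -H⁺y and d(p,q) = 1; if (t(p),t(q)) = (1,∞), then y ∈ -H⁺x and d(p,q) = 1; if (t(p),t(q)) = (∞,0), then y ∈ H⁺x and d(p,q) = 1; if (t(p),t(q)) = (∞,1), then x ∈ -H⁺y and d(p,q) = 1. -/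

import Mathlib

open Matrix

abbrev V6 := Fin 6 → ℤ

def C6 : Matrix (Fin 6) (Fin 6) ℤ :=
  !![1,0,-1,-1,1,1;
     0,1,-1,-1,1,1;
     0,0,1,0,-1,-1;
     0,0,0,1,-1,-1;
     0,0,0,0,1,0;
     0,0,0,0,0,1]

/-- The bilinear form `⟨x,y⟩ = xᵀ C y` on `ℤ^6`. -/
def form (x y : V6) : ℤ := x ⬝ᵥ C6.mulVec y

/-- The quaternion `i`. -/
def qI : Quaternion ℤ := ⟨0,1,0,0⟩
/-- The quaternion `j`. -/
def qJ : Quaternion ℤ := ⟨0,0,1,0⟩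
/-- The quaternion `k`. -/
def qK : Quaternion ℤ := ⟨0,0,0,1⟩

instance : DecidableEq (Quaternion ℤ) := fun x y =>
  decidable_of_iff (x.re = y.re ∧ x.imI = y.imI ∧ x.imJ = y.imJ ∧ x.imK = y.imK)
    ⟨fun ⟨h1, h2, h3, h4⟩ => QuaternionAlgebra.ext h1 h2 h3 h4,
     fun h => by subst h; exact ⟨rfl, rfl, rfl, rfl⟩⟩

/-- The quaternion group `H = {±1, ±i, ±j, ±k}`. -/
def Hset : Finset (Quaternion ℤ) := {1, -1, qI, -qI, qJ, -qJ, qK, -qK}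

/-- The subset `H⁺ = {1, i, j, k}`. -/
def Hplus : Finset (Quaternion ℤ) := {1, qI, qJ, qK}

/-- Index type for the three special slopes `0`, `1`, `∞`. -/
inductive Ty | zero | one | inf
deriving DecidableEq

def h0 : V6 := ![0,0,1,1,1,1]
def h1 : V6 := ![1,1,2,2,1,1]
def hinf : V6 := ![1,1,1,1,0,0]

def hTy : Ty → V6
  | .zero => h0
  | .one => h1
  | .inf => hinf

/-- The vectors `v_t^x` for `t ∈ {0,1,∞}` and `x ∈ H⁺`. -/
def vposTy : Ty → Quaternion ℤ → V6
  | .zero, x => if x = 1 then ![0,0,1,0,1,0] else if x = qI then ![-1,0,0,0,0,0]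
      else if x = qJ then ![0,0,1,0,0,1] else ![0,1,1,1,1,1]
  | .one, x => if x = 1 then ![1,0,1,1,1,0] else if x = qI then ![0,1,1,1,1,0]
      else if x = qJ then ![0,0,1,0,0,0] else ![1,1,2,1,1,1]
  | .inf, x => if x = 1 then ![1,0,0,1,0,0] else if x = qI then ![1,1,1,1,1,0]
      else if x = qJ then ![0,0,0,0,0,-1] else ![1,0,1,0,0,0]

/-- The vectors `v_t^x` for `t ∈ {0,1,∞}` and `x ∈ H`, with `v_t^{-x} = h_t - v_t^x`. -/
def vTy (t : Ty) (x : Quaternion ℤ) : V6 :=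
  if x ∈ Hplus then vposTy t x else hTy t - vposTy t (-x)

/-- `a(q)`: numerator, with `a(∞) = 1`. -/
def aQ : WithTop ℚ → ℤ := WithTop.recTopCoe 1 Rat.num

/-- `b(q)`: denominator, with `b(∞) = 0`. -/
def bQ : WithTop ℚ → ℤ := WithTop.recTopCoe 0 (fun x => (x.den : ℤ))

/-- The type `t(q) ∈ {0,1,∞}` of a slope `q`. -/
def tyQ (q : WithTop ℚ) : Ty :=
  if aQ q % 2 = 0 then Ty.zero else if bQ q % 2 = 1 then Ty.one else Ty.inf

/-- `⌊n⌋₂ = n/2` for even `n` and `(n-1)/2` for odd `n`. -/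
def half2 (n : ℤ) : ℤ := if Even n then n / 2 else (n - 1) / 2

/-- `h_q = b(q)·h₀ + a(q)·h_∞`. -/
def hQ (q : WithTop ℚ) : V6 := bQ q • h0 + aQ q • hinf

/-- `v_q^x = v_{t(q)}^x + ⌊b(q)⌋₂·h₀ + ⌊a(q)⌋₂·h_∞`. -/
def vQ (q : WithTop ℚ) (x : Quaternion ℤ) : V6 :=
  vTy (tyQ q) x + half2 (bQ q) • h0 + half2 (aQ q) • hinf

/-- `rk e = ⟨e, h_∞⟩`. -/
def rk (e : V6) : ℤ := form e hinf

/-- `deg e = ⟨h₀, e⟩`. -/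
def degV (e : V6) : ℤ := form h0 e

/-- `e` is positive if `rk e > 0`, or `rk e = 0` and `deg e > 0`. -/
def PosV (e : V6) : Prop := 0 < rk e ∨ (rk e = 0 ∧ 0 < degV e)

/-- `d(p,q) = |a(q)b(p) - a(p)b(q)|`. -/
def dQ (p q : WithTop ℚ) : ℤ := |aQ q * bQ p - aQ p * bQ q|

/-- Complexity `c(p) = |a(p)| + |b(p)| + |a(p)+b(p)|`. -/
def cpx (p : WithTop ℚ) : ℤ := |aQ p| + |bQ p| + |aQ p + bQ p|

/-! On the plane spanned by `h₀` and `h_∞` the form is twice the determinant, so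
`⟨h_p, h_q⟩ = 2 d(p,q)` for `p < q`. Each `v_t^x` pairs with `h₀` and `h_∞` exactly as `h_t / 2`
does, and `v_q^x - v_{t(q)}^x` lies in that plane with coefficients `⌊b(q)⌋₂, ⌊a(q)⌋₂`. Expanding,
`2⟨v_p^x, v_q^y⟩ = d(p,q) - δ`, where the defect `δ` depends only on the types and on `x, y`.
A finite computation shows `δ ≤ 0` unless the stated condition on `x, y` holds, in which case `δ`
is `2` for equal types and `1` otherwise; as `d(p,q) ≥ 1`, the form vanishes exactly when
`d(p,q) = δ`. -/

/-- `aTy t / bTy t` is the representative `0/1`, `1/1`, `1/0` of the type `t`. -/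
def aTy : Ty → ℤ
  | .zero => 0
  | .one => 1
  | .inf => 1

def bTy : Ty → ℤ
  | .zero => 1
  | .one => 1
  | .inf => 0

def OrthCond : Ty → Ty → Quaternion ℤ → Quaternion ℤ → Prop
  | .zero, .zero, x, y | .one, .one, x, y | .inf, .inf, x, y => x = -y
  | .zero, .one, x, y => ∃ h ∈ Hplus, y = -(h * x)
  | .zero, .inf, x, y => ∃ h ∈ Hplus, x = h * y
  | .one, .zero, x, y => ∃ h ∈ Hplus, x = -(h * y)
  | .one, .inf, x, y => ∃ h ∈ Hplus, y = -(h * x)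
  | .inf, .zero, x, y => ∃ h ∈ Hplus, y = h * x
  | .inf, .one, x, y => ∃ h ∈ Hplus, x = -(h * y)

def gap (t s : Ty) : ℤ := if t = s then 2 else 1

def detQ (p q : WithTop ℚ) : ℤ := aQ q * bQ p - aQ p * bQ q

def defect (t s : Ty) (x y : Quaternion ℤ) : ℤ :=
  aTy s * bTy t - aTy t * bTy s - 2 * form (vTy t x) (vTy s y)

lemma two_mul_half2_add_emod_two (n : ℤ) : 2 * half2 n + n % 2 = n := by
  rw [half2]
  split_ifs with h <;> rw [Int.even_iff] at h <;> omega

lemma aQ_top : aQ ⊤ = 1 := rfl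
lemma bQ_top : bQ ⊤ = 0 := rfl
lemma aQ_coe (r : ℚ) : aQ r = r.num := rfl
lemma bQ_coe (r : ℚ) : bQ r = r.den := rfl

lemma not_even_aQ_and_bQ (q : WithTop ℚ) : ¬(aQ q % 2 = 0 ∧ bQ q % 2 = 0) := by
  induction q using WithTop.recTopCoe with
  | top => simp [aQ_top, bQ_top]
  | coe r =>
    rintro ⟨ha, hb⟩
    have h2 : 2 ∣ 1 := by
      rw [← r.reduced]
      exact Nat.dvd_gcd (by rw [aQ_coe] at ha; omega) (by rw [bQ_coe] at hb; omega)
    omega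

lemma two_mul_half2_add_aTy_bTy (q : WithTop ℚ) :
    2 * half2 (aQ q) + aTy (tyQ q) = aQ q ∧ 2 * half2 (bQ q) + bTy (tyQ q) = bQ q := by
  have := not_even_aQ_and_bQ q
  have ha := two_mul_half2_add_emod_two (aQ q)
  have hb := two_mul_half2_add_emod_two (bQ q)
  unfold tyQ
  split_ifs <;> simp only [aTy, bTy] <;> omega

lemma detQ_pos_of_lt {p q : WithTop ℚ} (h : p < q) : 0 < detQ p q := by
  induction q using WithTop.recTopCoe with
  | top =>
    induction p using WithTop.recTopCoe with
    | top => exact absurd h (lt_irrefl _)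
    | coe r => simp [detQ, aQ_top, bQ_top, bQ_coe, r.pos]
  | coe s =>
    induction p using WithTop.recTopCoe with
    | top => exact absurd h (by simp)
    | coe r =>
      have hrs : r < s := by exact_mod_cast h
      rw [Rat.lt_iff] at hrs
      simp only [detQ, aQ_coe, bQ_coe]
      omega

lemma form_add_smul (u v w : V6) (n : ℤ) : form u (v + n • w) = form u v + n * form u w := by
  simp only [form, mulVec_add, mulVec_smul, dotProduct_add, dotProduct_smul, smul_eq_mul]

lemma add_smul_form (u v w : V6) (n : ℤ) : form (u + n • w) v = form u v + n * form w v := by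
  simp only [form, add_dotProduct, smul_dotProduct, smul_eq_mul]

lemma form_h0_h0 : form h0 h0 = 0 := by decide
lemma form_h0_hinf : form h0 hinf = 2 := by decide
lemma form_hinf_h0 : form hinf h0 = -2 := by decide
lemma form_hinf_hinf : form hinf hinf = 0 := by decide

section vTy

variable (t : Ty) (x : Quaternion ℤ)

lemma form_vTy_h0 : form (vTy t x) h0 = -aTy t := by
  cases t <;> simp only [vTy, vposTy] <;> split_ifs <;> decide

lemma form_vTy_hinf : form (vTy t x) hinf = bTy t := by
  cases t <;> simp only [vTy, vposTy] <;> split_ifs <;> decide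

lemma form_h0_vTy : form h0 (vTy t x) = aTy t := by
  cases t <;> simp only [vTy, vposTy] <;> split_ifs <;> decide

lemma form_hinf_vTy : form hinf (vTy t x) = -bTy t := by
  cases t <;> simp only [vTy, vposTy] <;> split_ifs <;> decide

end vTy

lemma two_mul_form_add_h0_hinf {u v : V6} {α β α' β' a b a' b' N M N' M' : ℤ}
    (hu0 : form u h0 = -α) (huinf : form u hinf = β)
    (hv0 : form h0 v = α') (hvinf : form hinf v = -β')
    (ha : 2 * M + α = a) (hb : 2 * N + β = b) (ha' : 2 * M' + α' = a') (hb' : 2 * N' + β' = b') :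
    2 * form (u + N • h0 + M • hinf) (v + N' • h0 + M' • hinf)
      = (a' * b - a * b') - (α' * β - α * β' - 2 * form u v) := by
  subst ha hb ha' hb'
  simp only [form_add_smul, add_smul_form, hu0, huinf, hv0, hvinf,
    form_h0_h0, form_h0_hinf, form_hinf_h0, form_hinf_hinf]
  ring

lemma two_mul_form_vQ (p q : WithTop ℚ) (x y : Quaternion ℤ) :
    2 * form (vQ p x) (vQ q y) = detQ p q - defect (tyQ p) (tyQ q) x y :=
  two_mul_form_add_h0_hinf (form_vTy_h0 _ _) (form_vTy_hinf _ _) (form_h0_vTy _ _)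
    (form_hinf_vTy _ _) (two_mul_half2_add_aTy_bTy p).1 (two_mul_half2_add_aTy_bTy p).2
    (two_mul_half2_add_aTy_bTy q).1 (two_mul_half2_add_aTy_bTy q).2

instance (t s : Ty) (x y : Quaternion ℤ) : Decidable (OrthCond t s x y) := by
  cases t <;> cases s <;> dsimp only [OrthCond] <;> infer_instance

lemma defect_spec (t s : Ty) : ∀ x ∈ Hset, ∀ y ∈ Hset,
    (OrthCond t s x y → defect t s x y = gap t s) ∧ (¬OrthCond t s x y → defect t s x y ≤ 0) := by
  cases t <;> cases s <;> decide

lemma form_vQ_eq_zero_iff {p q : WithTop ℚ} (hpq : p < q) {x y : Quaternion ℤ}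
    (hx : x ∈ Hset) (hy : y ∈ Hset) :
    form (vQ p x) (vQ q y) = 0 ↔ OrthCond (tyQ p) (tyQ q) x y ∧ dQ p q = gap (tyQ p) (tyQ q) := by
  have hpos := detQ_pos_of_lt hpq
  have hd : dQ p q = detQ p q := abs_of_pos hpos
  have key := two_mul_form_vQ p q x y
  obtain ⟨of_cond, of_not_cond⟩ := defect_spec (tyQ p) (tyQ q) x hx y hy
  rw [hd]
  by_cases hcond : OrthCond (tyQ p) (tyQ q) x y
  · have := of_cond hcond
    simp only [hcond, true_and]
    omega
  · have := of_not_cond hcond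
    simp only [hcond, false_and, iff_false]
    omega

theorem stmt9 (p q : WithTop ℚ) (hpq : p < q) (x y : Quaternion ℤ)
    (hx : x ∈ Hset) (hy : y ∈ Hset) :
    form (vQ p x) (vQ q y) = 0 ↔
      (match tyQ p, tyQ q with
      | .zero, .zero => x = -y ∧ dQ p q = 2
      | .one, .one => x = -y ∧ dQ p q = 2
      | .inf, .inf => x = -y ∧ dQ p q = 2
      | .zero, .one => (∃ h ∈ Hplus, y = -(h * x)) ∧ dQ p q = 1
      | .zero, .inf => (∃ h ∈ Hplus, x = h * y) ∧ dQ p q = 1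
      | .one, .zero => (∃ h ∈ Hplus, x = -(h * y)) ∧ dQ p q = 1
      | .one, .inf => (∃ h ∈ Hplus, y = -(h * x)) ∧ dQ p q = 1
      | .inf, .zero => (∃ h ∈ Hplus, y = h * x) ∧ dQ p q = 1
      | .inf, .one => (∃ h ∈ Hplus, x = -(h * y)) ∧ dQ p q = 1) := by
  have h := form_vQ_eq_zero_iff hpq hx hy
  revert h
  cases tyQ p <;> cases tyQ q <;> exact id
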